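/- (Stability of controlled doubling under extra conditioning) Let X be a ℚ-valued discrete random variable and Z, W further discrete random variables, with H[X|Z] and H[X|W,Z] both within O(δM) of a quantity M > 0. Then E_{(W,Z)=(w,z)} d[X|(W,Z)=(w,z); X|(W,Z)=(w,z)] ≤ 2 E_{Z=z} d[X|Z=z; X|Z=z] + C δ M for an absolute constant C, where d denotes the entropic Ruzsa distance. In particular, if the conditional self-doubling of X given Z is O(δM), so is the conditional self-doubling of X given (W,Z). -/

import Mathlib

open scoped Classical
open Finset

/-- Probability of an event under a weight function on a finite sample space. -/
noncomputable def prb {Ω : Type*} [Fintype Ω] (μ : Ω → ℝ) (E : Set Ω) : ℝ :=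
  ∑ ω ∈ Finset.univ.filter (fun ω => ω ∈ E), μ ω

/-- `μ` is a probability mass function on the finite space `Ω`. -/
def IsProb {Ω : Type*} [Fintype Ω] (μ : Ω → ℝ) : Prop :=
  (∀ ω, 0 ≤ μ ω) ∧ ∑ ω, μ ω = 1

/-- Shannon entropy of a random variable `X` on a finite probability space. -/
noncomputable def ent {Ω S : Type*} [Fintype Ω] (μ : Ω → ℝ) (X : Ω → S) : ℝ :=
  ∑ s ∈ Finset.univ.image X, Real.negMulLog (prb μ {ω | X ω = s})

/-- Independence of two random variables. -/
def IndepRV {Ω S T : Type*} [Fintype Ω] (μ : Ω → ℝ) (X : Ω → S) (Y : Ω → T) : Prop :=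
  ∀ x y, prb μ {ω | X ω = x ∧ Y ω = y} = prb μ {ω | X ω = x} * prb μ {ω | Y ω = y}

/-- Conditional Shannon entropy `H[X|Z] = H[X,Z] - H[Z]`. -/
noncomputable def condEnt {Ω S T : Type*} [Fintype Ω] (μ : Ω → ℝ) (X : Ω → S) (Z : Ω → T) : ℝ :=
  ent μ (fun ω => (X ω, Z ω)) - ent μ Z

/-- Entropic Ruzsa distance `d[X;Y] = H[X'-Y'] - H[X]/2 - H[Y]/2`,
realized on the product space so that the copies are independent. -/
noncomputable def rdist {Ω₁ Ω₂ : Type*} [Fintype Ω₁] [Fintype Ω₂]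
    (μ₁ : Ω₁ → ℝ) (μ₂ : Ω₂ → ℝ) (X : Ω₁ → ℚ) (Y : Ω₂ → ℚ) : ℝ :=
  ent (fun p : Ω₁ × Ω₂ => μ₁ p.1 * μ₂ p.2) (fun p => X p.1 - Y p.2)
    - ent μ₁ X / 2 - ent μ₂ Y / 2

/-- The quantity `g(a) = H[X - a X'] - H[X]`, where `X'` is an independent copy of `X`. -/
noncomputable def gfun {Ω : Type*} [Fintype Ω] (μ : Ω → ℝ) (X : Ω → ℚ) (a : ℚ) : ℝ :=
  ent (fun p : Ω × Ω => μ p.1 * μ p.2) (fun p => X p.1 - a * X p.2) - ent μ X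

/-- Projection `π_r(x,y) = x + r y` for a finite slope `some r`, and `π_∞(x,y) = y`. -/
noncomputable def pSlope : Option ℚ → ℚ × ℚ → ℚ
  | none, p => p.2
  | some r, p => p.1 + r * p.2

/-- The measure `μ` conditioned on the event `Z = z`. -/
noncomputable def condMeasure {Ω T : Type*} [Fintype Ω] (μ : Ω → ℝ) (Z : Ω → T) (z : T) :
    Ω → ℝ :=
  fun ω => if Z ω = z then μ ω / prb μ {ω' | Z ω' = z} else 0

/-- `E_{Z=z} d[X|Z=z ; X|Z=z]`, the averaged conditional entropic Ruzsa self-distance. -/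
noncomputable def condSelfDoubling {Ω T : Type*} [Fintype Ω] (μ : Ω → ℝ)
    (X : Ω → ℚ) (Z : Ω → T) : ℝ :=
  ∑ z ∈ Finset.univ.image Z, prb μ {ω | Z ω = z} *
    rdist (condMeasure μ Z z) (condMeasure μ Z z) X X

/-!
Fix a value `z` of `Z` and work inside the slice `Z = z`. Since `d[A;A] ≤ 2 d[A;B]` by the Ruzsa
triangle inequality, `d[X|W=w; X|W=w] ≤ 2 d[X|W=w; X]`. Conditioning the first argument of a Ruzsa
distance on `W` costs at most half the mutual information,
`E_w d[X|W=w; X] ≤ d[X;X] + (H[X] - H[X|W]) / 2`,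
because `E_w H[X_w - X'] = H[X - X' | W] ≤ H[X - X']`.
Averaging over `z` gives `E d[X|(W,Z)] ≤ 2 E d[X|Z] + H[X|Z] - H[X|W,Z]`, and the two hypotheses
bound the last difference by `2δM`.
-/

open Real

local notation:70 μ₁:71 " ⊗ₚ " μ₂:71 => fun p : _ × _ => μ₁ (Prod.fst p) * μ₂ (Prod.snd p)

section Probability

variable {Ω Ω' S : Type*} [Fintype Ω] [Fintype Ω'] {μ : Ω → ℝ}

lemma prb_nonneg (hμ : ∀ ω, 0 ≤ μ ω) (E : Set Ω) : 0 ≤ prb μ E :=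
  sum_nonneg fun ω _ => hμ ω

lemma prb_mono (hμ : ∀ ω, 0 ≤ μ ω) {E F : Set Ω} (h : E ⊆ F) : prb μ E ≤ prb μ F :=
  sum_le_sum_of_subset_of_nonneg (monotone_filter_right _ fun _ _ hω => h hω)
    fun ω _ _ => hμ ω

lemma le_prb_of_mem (hμ : ∀ ω, 0 ≤ μ ω) {E : Set Ω} {ω : Ω} (h : ω ∈ E) : μ ω ≤ prb μ E :=
  single_le_sum (fun ω _ => hμ ω) (by simpa using h)

lemma prb_pos_of_mem (hμ : ∀ ω, 0 ≤ μ ω) {E : Set Ω} {ω : Ω} (h : ω ∈ E) (hω : μ ω ≠ 0) :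
    0 < prb μ E :=
  ((hμ ω).lt_of_ne' hω).trans_le (le_prb_of_mem hμ h)

lemma prb_univ (hμ : IsProb μ) : prb μ Set.univ = 1 := by
  simpa [prb] using hμ.2

lemma prb_singleton (μ : Ω → ℝ) (ω₀ : Ω) : prb μ {ω₀} = μ ω₀ := by
  rw [prb]
  simp [sum_filter]

lemma prb_fiber_eq_zero (μ : Ω → ℝ) {X : Ω → S} {s : S} (hs : ∀ ω, X ω ≠ s) :
    prb μ {ω | X ω = s} = 0 := by
  simp [prb, hs]

lemma sum_prb_fiber_mul (μ : Ω → ℝ) {X : Ω → S} {t : Finset S} (ht : ∀ ω, X ω ∈ t)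
    (f : S → ℝ) : ∑ s ∈ t, prb μ {ω | X ω = s} * f s = ∑ ω, μ ω * f (X ω) := by
  rw [← sum_fiberwise_of_maps_to (fun ω _ => ht ω)]
  refine sum_congr rfl fun s _ => ?_
  rw [prb, sum_mul]
  refine sum_congr (by simp) fun ω hω => ?_
  rw [(mem_filter.1 hω).2]

lemma sum_prb_inter_fiber (μ : Ω → ℝ) (E : Set Ω) (X : Ω → S) :
    ∑ s ∈ univ.image X, prb μ {ω | ω ∈ E ∧ X ω = s} = prb μ E := by
  rw [prb, ← sum_fiberwise_of_maps_to (g := X) (fun ω _ => mem_image_of_mem X (mem_univ ω))]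
  simp only [prb, Set.mem_ofPred_eq, filter_filter]

lemma sum_prb_fiber (hμ : IsProb μ) {X : Ω → S} {t : Finset S} (ht : ∀ ω, X ω ∈ t) :
    ∑ s ∈ t, prb μ {ω | X ω = s} = 1 := by
  simpa [hμ.2] using sum_prb_fiber_mul μ ht 1

lemma prb_preimage_of_law {μ' : Ω' → ℝ} {g : Ω → Ω'}
    (hg : ∀ ω', prb μ {ω | g ω = ω'} = μ' ω') (E : Set Ω') :
    prb μ {ω | g ω ∈ E} = prb μ' E := by
  rw [prb, ← sum_fiberwise_of_maps_to (g := g) (t := univ.filter (· ∈ E)) (by simp)]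
  refine sum_congr rfl fun ω' hω' => ?_
  rw [← hg ω', prb]
  congr 1
  ext ω
  simp only [Set.mem_ofPred_eq, mem_filter, mem_univ, true_and] at hω' ⊢
  exact ⟨fun h => h.2, fun h => ⟨h ▸ hω', h⟩⟩

end Probability

section Entropy

variable {Ω Ω' S T U : Type*} [Fintype Ω] [Fintype Ω'] {μ : Ω → ℝ}

lemma ent_eq_sum_neg_log (μ : Ω → ℝ) (X : Ω → S) :
    ent μ X = ∑ ω, μ ω * -log (prb μ {ω' | X ω' = X ω}) := by
  rw [ent, ← sum_prb_fiber_mul μ (fun ω => mem_image_of_mem X (mem_univ ω))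
    (fun s => -log (prb μ {ω' | X ω' = s}))]
  simp only [negMulLog, neg_mul, mul_neg]

lemma ent_eq_sum_of_mem (μ : Ω → ℝ) {X : Ω → S} {t : Finset S} (ht : ∀ ω, X ω ∈ t) :
    ent μ X = ∑ s ∈ t, negMulLog (prb μ {ω | X ω = s}) := by
  refine sum_subset (by simpa [subset_iff] using ht) fun s _ hs => ?_
  rw [prb_fiber_eq_zero μ fun ω hω => hs (mem_image.2 ⟨ω, mem_univ ω, hω⟩), negMulLog_zero]

lemma ent_eq_of_prb_fiber_eq {μ' : Ω' → ℝ} {X : Ω → S} {X' : Ω' → S}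
    (h : ∀ s, prb μ {ω | X ω = s} = prb μ' {ω | X' ω = s}) : ent μ X = ent μ' X' := by
  rw [ent_eq_sum_of_mem μ (t := univ.image X ∪ univ.image X') (by simp),
    ent_eq_sum_of_mem μ' (t := univ.image X ∪ univ.image X') (by simp)]
  simp only [h]

lemma ent_comp_of_law {μ' : Ω' → ℝ} {g : Ω → Ω'} (hg : ∀ ω', prb μ {ω | g ω = ω'} = μ' ω')
    (X : Ω' → S) : ent μ (fun ω => X (g ω)) = ent μ' X :=
  ent_eq_of_prb_fiber_eq fun s => prb_preimage_of_law hg {ω' | X ω' = s}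

lemma ent_comp_le (hμ : ∀ ω, 0 ≤ μ ω) (X : Ω → S) (f : S → T) :
    ent μ (fun ω => f (X ω)) ≤ ent μ X := by
  rw [ent_eq_sum_neg_log, ent_eq_sum_neg_log]
  refine sum_le_sum fun ω _ => ?_
  rcases eq_or_ne (μ ω) 0 with h | h
  · simp [h]
  · refine mul_le_mul_of_nonneg_left (neg_le_neg (log_le_log (prb_pos_of_mem hμ rfl h) ?_)) (hμ ω)
    exact prb_mono hμ fun ω' h' => congrArg f h'

lemma ent_comp_eq_of_leftInverse (hμ : ∀ ω, 0 ≤ μ ω) (X : Ω → S) (f : S → T) (g : T → S)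
    (hg : ∀ ω, g (f (X ω)) = X ω) : ent μ (fun ω => f (X ω)) = ent μ X :=
  (ent_comp_le hμ X f).antisymm (by simpa only [hg] using ent_comp_le hμ (fun ω => f (X ω)) g)

lemma negMulLog_le_mul_neg_log_add_sub {p q : ℝ} (hp : 0 ≤ p) (hq : 0 ≤ q)
    (hpq : 0 < p → 0 < q) : negMulLog p ≤ p * -log q + (q - p) := by
  rcases hp.eq_or_lt with rfl | hp
  · simpa using hq
  · have hq := hpq hp
    have := mul_le_mul_of_nonneg_left (log_le_sub_one_of_pos (div_pos hq hp)) hp.le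
    rw [log_div hq.ne' hp.ne', mul_sub_one, mul_div_cancel₀ _ hp.ne'] at this
    rw [negMulLog]
    linarith

/-- Gibbs' inequality. -/
lemma ent_le_sum_neg_log (hμ : IsProb μ) {X : Ω → S} {t : Finset S} (ht : ∀ ω, X ω ∈ t)
    {q : S → ℝ} (hq : ∀ s, 0 ≤ q s) (hq_pos : ∀ s, 0 < prb μ {ω | X ω = s} → 0 < q s)
    (hq_sum : ∑ s ∈ t, q s ≤ 1) : ent μ X ≤ ∑ ω, μ ω * -log (q (X ω)) := by
  calc ent μ X
      ≤ ∑ s ∈ t, (prb μ {ω | X ω = s} * -log (q s) + (q s - prb μ {ω | X ω = s})) := by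
        rw [ent_eq_sum_of_mem μ ht]
        exact sum_le_sum fun s _ =>
          negMulLog_le_mul_neg_log_add_sub (prb_nonneg hμ.1 _) (hq s) (hq_pos s)
    _ = ∑ ω, μ ω * -log (q (X ω)) + (∑ s ∈ t, q s - 1) := by
        rw [sum_add_distrib, sum_sub_distrib, sum_prb_fiber_mul μ ht, sum_prb_fiber hμ ht]
    _ ≤ ∑ ω, μ ω * -log (q (X ω)) := by linarith

end Entropy

section Inequalities

variable {Ω S T U : Type*} [Fintype Ω] {μ : Ω → ℝ}

lemma condEnt_le_condEnt_comp (hμ : IsProb μ) (B : Ω → T) (V : Ω → S) (f : S → U) :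
    condEnt μ B V ≤ condEnt μ B (fun ω => f (V ω)) := by
  set PV : S → ℝ := fun v => prb μ {ω | V ω = v}
  set PfV : U → ℝ := fun u => prb μ {ω | f (V ω) = u}
  set PBfV : T × U → ℝ := fun p => prb μ {ω | (B ω, f (V ω)) = p}
  -- the law of `V` glued to the conditional law of `B` given `f ∘ V`
  set q : T × S → ℝ := fun p => PV p.2 * PBfV (p.1, f p.2) / PfV (f p.2)
  have hP := prb_nonneg hμ.1
  have hq : ∀ p, 0 ≤ q p := fun p => div_nonneg (mul_nonneg (hP _) (hP _)) (hP _)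
  have hq_pos : ∀ p, 0 < prb μ {ω | (B ω, V ω) = p} → 0 < q p := fun p hp => by
    refine div_pos (mul_pos (hp.trans_le (prb_mono hμ.1 fun ω h => ?_))
      (hp.trans_le (prb_mono hμ.1 fun ω h => ?_))) (hp.trans_le (prb_mono hμ.1 fun ω h => ?_))
    · exact congrArg Prod.snd h
    · simp_all [Prod.ext_iff]
    · simp_all [Prod.ext_iff]
  have hfiber : ∀ v, ∑ b ∈ univ.image B, PBfV (b, f v) = PfV (f v) := fun v => by
    simp only [PBfV, PfV, ← sum_prb_inter_fiber μ {ω | f (V ω) = f v} B]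
    refine sum_congr rfl fun b _ => congrArg (prb μ) (Set.ext fun ω => ?_)
    simp [Prod.ext_iff, and_comm]
  have hq_sum : ∑ p ∈ univ.image B ×ˢ univ.image V, q p ≤ 1 :=
    calc ∑ p ∈ univ.image B ×ˢ univ.image V, q p
        = ∑ v ∈ univ.image V, PV v * (PfV (f v) / PfV (f v)) := by
          rw [sum_product, sum_comm]
          refine sum_congr rfl fun v _ => ?_
          simp only [q]
          rw [← sum_div, ← mul_sum, mul_div_assoc, hfiber]
      _ ≤ ∑ v ∈ univ.image V, PV v :=
          sum_le_sum fun v _ => mul_le_of_le_one_right (hP _) (div_self_le_one _)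
      _ = 1 := sum_prb_fiber hμ fun ω => mem_image_of_mem V (mem_univ ω)
  have hgibbs := ent_le_sum_neg_log hμ (X := fun ω => (B ω, V ω))
    (fun ω => mem_product.2 ⟨mem_image_of_mem B (mem_univ ω), mem_image_of_mem V (mem_univ ω)⟩)
    hq hq_pos hq_sum
  have hcross : ∑ ω, μ ω * -log (q (B ω, V ω)) =
      ent μ V + ent μ (fun ω => (B ω, f (V ω))) - ent μ (fun ω => f (V ω)) := by
    simp only [ent_eq_sum_neg_log, ← sum_add_distrib, ← sum_sub_distrib]
    refine sum_congr rfl fun ω _ => ?_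
    rcases eq_or_ne (μ ω) 0 with h | h
    · simp [h]
    have h1 : 0 < PV (V ω) := prb_pos_of_mem hμ.1 rfl h
    have h2 : 0 < PBfV (B ω, f (V ω)) := prb_pos_of_mem hμ.1 rfl h
    have h3 : 0 < PfV (f (V ω)) := prb_pos_of_mem hμ.1 rfl h
    simp only [q, log_div (mul_pos h1 h2).ne' h3.ne', log_mul h1.ne' h2.ne']
    ring
  rw [condEnt, condEnt]
  linarith

lemma ent_const (hμ : IsProb μ) (c : T) : ent μ (fun _ => c) = 0 := by
  simp [ent_eq_sum_neg_log, prb_univ hμ]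

lemma condEnt_le_ent (hμ : IsProb μ) (X : Ω → S) (Z : Ω → T) : condEnt μ X Z ≤ ent μ X := by
  have h := condEnt_le_condEnt_comp hμ X Z fun _ => ()
  rwa [condEnt, condEnt, ent_const hμ, sub_zero,
    ent_comp_eq_of_leftInverse hμ.1 X (fun x => (x, ())) Prod.fst fun _ => rfl] at h

lemma ent_pair_of_indep (hμ : ∀ ω, 0 ≤ μ ω) {X : Ω → S} {Y : Ω → T} (h : IndepRV μ X Y) :
    ent μ (fun ω => (X ω, Y ω)) = ent μ X + ent μ Y := by
  simp only [ent_eq_sum_neg_log, ← sum_add_distrib]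
  refine sum_congr rfl fun ω _ => ?_
  rcases eq_or_ne (μ ω) 0 with h0 | h0
  · simp [h0]
  have hX : 0 < prb μ {ω' | X ω' = X ω} := prb_pos_of_mem hμ rfl h0
  have hY : 0 < prb μ {ω' | Y ω' = Y ω} := prb_pos_of_mem hμ rfl h0
  have hXY : {ω' | (X ω', Y ω') = (X ω, Y ω)} = {ω' | X ω' = X ω ∧ Y ω' = Y ω} := by
    simp only [Prod.mk.injEq]
  rw [hXY, h, log_mul hX.ne' hY.ne']
  ring

lemma ent_sub_add_ent_le {G : Type*} [AddCommGroup G] (hμ : IsProb μ) (A B C : Ω → G)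
    (h : IndepRV μ B (fun ω => (A ω, C ω))) :
    ent μ (fun ω => A ω - C ω) + ent μ B ≤
      ent μ (fun ω => A ω - B ω) + ent μ (fun ω => B ω - C ω) := by
  -- `H[A - B | A, C] = H[B]` by independence, and conditioning only on `A - C` can only raise it
  have hsub := condEnt_le_condEnt_comp hμ (fun ω => A ω - B ω) (fun ω => (A ω, C ω))
    fun p => p.1 - p.2
  have hshear : ent μ (fun ω => (A ω - B ω, (A ω, C ω))) = ent μ (fun ω => (B ω, (A ω, C ω))) :=
    ent_comp_eq_of_leftInverse hμ.1 (fun ω => (B ω, (A ω, C ω))) (fun p => (p.2.1 - p.1, p.2))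
      (fun p => (p.2.1 - p.1, p.2)) fun _ => Prod.ext (sub_sub_cancel _ _) rfl
  have hmono : ent μ (fun ω => (A ω - B ω, A ω - C ω)) ≤
      ent μ (fun ω => (A ω - B ω, B ω - C ω)) := by
    have := ent_comp_le hμ.1 (fun ω => (A ω - B ω, B ω - C ω)) fun p => (p.1, p.1 + p.2)
    simpa only [sub_add_sub_cancel] using this
  have hsplit := condEnt_le_ent hμ (fun ω => A ω - B ω) (fun ω => B ω - C ω)
  rw [condEnt, condEnt, hshear, ent_pair_of_indep hμ.1 h] at hsub
  rw [condEnt] at hsplit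
  dsimp only at hsub
  linarith

end Inequalities

section Product

variable {Ω₁ Ω₂ Ω₃ : Type*} [Fintype Ω₁] [Fintype Ω₂] [Fintype Ω₃]
  {μ₁ : Ω₁ → ℝ} {μ₂ : Ω₂ → ℝ} {μ₃ : Ω₃ → ℝ}

lemma prb_prod_rect (μ₁ : Ω₁ → ℝ) (μ₂ : Ω₂ → ℝ) (E : Set Ω₁) (F : Set Ω₂) :
    prb (μ₁ ⊗ₚ μ₂) {p | p.1 ∈ E ∧ p.2 ∈ F} = prb μ₁ E * prb μ₂ F := by
  rw [prb, prb, prb, sum_mul_sum, ← sum_product']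
  exact sum_congr (by ext; simp) fun _ _ => rfl

lemma isProb_prod (h₁ : IsProb μ₁) (h₂ : IsProb μ₂) : IsProb (μ₁ ⊗ₚ μ₂) :=
  ⟨fun p => mul_nonneg (h₁.1 p.1) (h₂.1 p.2), by
    rw [← univ_product_univ, sum_product, ← sum_mul_sum, h₁.2, h₂.2, one_mul]⟩

lemma prb_prod_fst (h₂ : IsProb μ₂) (E : Set Ω₁) :
    prb (μ₁ ⊗ₚ μ₂) {p | p.1 ∈ E} = prb μ₁ E := by
  simpa [prb_univ h₂] using prb_prod_rect μ₁ μ₂ E Set.univ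

lemma prb_prod_prod_rect (μ₁ : Ω₁ → ℝ) (μ₂ : Ω₂ → ℝ) (μ₃ : Ω₃ → ℝ) (E : Set Ω₁) (F : Set Ω₂)
    (G : Set Ω₃) : prb (μ₁ ⊗ₚ (μ₂ ⊗ₚ μ₃)) {p | p.1 ∈ E ∧ p.2.1 ∈ F ∧ p.2.2 ∈ G} =
      prb μ₁ E * prb μ₂ F * prb μ₃ G := by
  rw [mul_assoc, ← prb_prod_rect μ₂ μ₃]
  exact prb_prod_rect μ₁ (μ₂ ⊗ₚ μ₃) E {r | r.1 ∈ F ∧ r.2 ∈ G}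

lemma indepRV_prod_prod_mid {α β γ : Type*} (h₁ : IsProb μ₁) (h₂ : IsProb μ₂) (h₃ : IsProb μ₃)
    (X : Ω₁ → α) (Y : Ω₂ → β) (Z : Ω₃ → γ) :
    IndepRV (μ₁ ⊗ₚ (μ₂ ⊗ₚ μ₃)) (fun p => Y p.2.1) (fun p => (X p.1, Z p.2.2)) := fun b t => by
  have hrect := prb_prod_prod_rect μ₁ μ₂ μ₃
  rw [show {p : Ω₁ × Ω₂ × Ω₃ | Y p.2.1 = b ∧ (X p.1, Z p.2.2) = t} =
      {p | p.1 ∈ {ω | X ω = t.1} ∧ p.2.1 ∈ {ω | Y ω = b} ∧ p.2.2 ∈ {ω | Z ω = t.2}} by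
    ext; simp [Prod.ext_iff]; tauto, hrect,
    show {p : Ω₁ × Ω₂ × Ω₃ | Y p.2.1 = b} =
      {p | p.1 ∈ Set.univ ∧ p.2.1 ∈ {ω | Y ω = b} ∧ p.2.2 ∈ Set.univ} by ext; simp, hrect,
    show {p : Ω₁ × Ω₂ × Ω₃ | (X p.1, Z p.2.2) = t} =
      {p | p.1 ∈ {ω | X ω = t.1} ∧ p.2.1 ∈ Set.univ ∧ p.2.2 ∈ {ω | Z ω = t.2}} by
    ext; simp [Prod.ext_iff], hrect, prb_univ h₁, prb_univ h₂, prb_univ h₃]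
  ring

end Product

section RuzsaDistance

variable {Ω₁ Ω₂ Ω₃ : Type*} [Fintype Ω₁] [Fintype Ω₂] [Fintype Ω₃]
  {μ₁ : Ω₁ → ℝ} {μ₂ : Ω₂ → ℝ} {μ₃ : Ω₃ → ℝ}

lemma rdist_symm (h₁ : ∀ ω, 0 ≤ μ₁ ω) (h₂ : ∀ ω, 0 ≤ μ₂ ω) (X : Ω₁ → ℚ) (Y : Ω₂ → ℚ) :
    rdist μ₁ μ₂ X Y = rdist μ₂ μ₁ Y X := by
  have hswap : ∀ q : Ω₂ × Ω₁, prb (μ₁ ⊗ₚ μ₂) {p | p.swap = q} = (μ₂ ⊗ₚ μ₁) q := fun q => by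
    rw [show {p : Ω₁ × Ω₂ | p.swap = q} = {p | p.1 ∈ ({q.2} : Set Ω₁) ∧ p.2 ∈ ({q.1} : Set Ω₂)} by
      ext; simp [Prod.ext_iff, and_comm], prb_prod_rect, prb_singleton, prb_singleton, mul_comm]
  have hneg :
      ent (μ₁ ⊗ₚ μ₂) (fun p => Y p.2 - X p.1) = ent (μ₁ ⊗ₚ μ₂) (fun p => X p.1 - Y p.2) := by
    have := ent_comp_eq_of_leftInverse (μ := μ₁ ⊗ₚ μ₂) (fun p => mul_nonneg (h₁ p.1) (h₂ p.2))
      (fun p => X p.1 - Y p.2) Neg.neg Neg.neg fun _ => neg_neg _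
    simpa only [neg_sub] using this
  have hlaw : ent (μ₁ ⊗ₚ μ₂) (fun p => Y p.2 - X p.1) = ent (μ₂ ⊗ₚ μ₁) (fun q => Y q.1 - X q.2) :=
    ent_comp_of_law hswap fun q => Y q.1 - X q.2
  rw [rdist, rdist, ← hlaw, hneg]
  ring

lemma rdist_triangle (h₁ : IsProb μ₁) (h₂ : IsProb μ₂) (h₃ : IsProb μ₃)
    (X : Ω₁ → ℚ) (Y : Ω₂ → ℚ) (Z : Ω₃ → ℚ) :
    rdist μ₁ μ₃ X Z ≤ rdist μ₁ μ₂ X Y + rdist μ₂ μ₃ Y Z := by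
  set ν := μ₁ ⊗ₚ (μ₂ ⊗ₚ μ₃)
  have hν : IsProb ν := isProb_prod h₁ (isProb_prod h₂ h₃)
  have hrect := prb_prod_prod_rect μ₁ μ₂ μ₃
  have law₁₂ : ∀ q, prb ν {p | (p.1, p.2.1) = q} = (μ₁ ⊗ₚ μ₂) q := fun q => by
    rw [show {p : Ω₁ × Ω₂ × Ω₃ | (p.1, p.2.1) = q} =
        {p | p.1 ∈ ({q.1} : Set Ω₁) ∧ p.2.1 ∈ ({q.2} : Set Ω₂) ∧ p.2.2 ∈ Set.univ} by
      ext; simp [Prod.ext_iff], hrect, prb_singleton, prb_singleton, prb_univ h₃, mul_one]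
  have law₁₃ : ∀ q, prb ν {p | (p.1, p.2.2) = q} = (μ₁ ⊗ₚ μ₃) q := fun q => by
    rw [show {p : Ω₁ × Ω₂ × Ω₃ | (p.1, p.2.2) = q} =
        {p | p.1 ∈ ({q.1} : Set Ω₁) ∧ p.2.1 ∈ Set.univ ∧ p.2.2 ∈ ({q.2} : Set Ω₃)} by
      ext; simp [Prod.ext_iff], hrect, prb_singleton, prb_singleton, prb_univ h₂, mul_one]
  have law₂₃ : ∀ q, prb ν {p | p.2 = q} = (μ₂ ⊗ₚ μ₃) q := fun q => by
    rw [show {p : Ω₁ × Ω₂ × Ω₃ | p.2 = q} =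
        {p | p.1 ∈ Set.univ ∧ p.2.1 ∈ ({q.1} : Set Ω₂) ∧ p.2.2 ∈ ({q.2} : Set Ω₃)} by
      ext; simp [Prod.ext_iff], hrect, prb_singleton, prb_singleton, prb_univ h₁, one_mul]
  have law₂ : ∀ b, prb ν {p | p.2.1 = b} = μ₂ b := fun b => by
    rw [show {p : Ω₁ × Ω₂ × Ω₃ | p.2.1 = b} =
        {p | p.1 ∈ Set.univ ∧ p.2.1 ∈ ({b} : Set Ω₂) ∧ p.2.2 ∈ Set.univ} by
      ext; simp, hrect, prb_singleton, prb_univ h₁, prb_univ h₃, one_mul, mul_one]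
  have hindep := indepRV_prod_prod_mid h₁ h₂ h₃ X Y Z
  have key := ent_sub_add_ent_le hν (fun p => X p.1) (fun p => Y p.2.1) (fun p => Z p.2.2) hindep
  have e₁₃ : ent ν (fun p => X p.1 - Z p.2.2) = ent (μ₁ ⊗ₚ μ₃) (fun q => X q.1 - Z q.2) :=
    ent_comp_of_law law₁₃ fun q => X q.1 - Z q.2
  have e₁₂ : ent ν (fun p => X p.1 - Y p.2.1) = ent (μ₁ ⊗ₚ μ₂) (fun q => X q.1 - Y q.2) :=
    ent_comp_of_law law₁₂ fun q => X q.1 - Y q.2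
  have e₂₃ : ent ν (fun p => Y p.2.1 - Z p.2.2) = ent (μ₂ ⊗ₚ μ₃) (fun q => Y q.1 - Z q.2) :=
    ent_comp_of_law law₂₃ fun q => Y q.1 - Z q.2
  have e₂ : ent ν (fun p => Y p.2.1) = ent μ₂ Y := ent_comp_of_law law₂ Y
  rw [e₁₃, e₁₂, e₂₃, e₂] at key
  simp only [rdist]
  linarith

lemma rdist_self_le_two_mul (h₁ : IsProb μ₁) (h₂ : IsProb μ₂) (X : Ω₁ → ℚ) (Y : Ω₂ → ℚ) :
    rdist μ₁ μ₁ X X ≤ 2 * rdist μ₁ μ₂ X Y := by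
  have := rdist_triangle h₁ h₂ h₁ X Y X
  rw [rdist_symm h₂.1 h₁.1 Y X] at this
  linarith

end RuzsaDistance

section Conditioning

variable {Ω Ω' S T U : Type*} [Fintype Ω] [Fintype Ω'] {μ : Ω → ℝ}

lemma prb_mul_condMeasure (hμ : ∀ ω, 0 ≤ μ ω) (Z : Ω → T) (z : T) (ω : Ω) :
    prb μ {ω' | Z ω' = z} * condMeasure μ Z z ω = if Z ω = z then μ ω else 0 := by
  rw [condMeasure]
  split_ifs with h
  · rcases eq_or_ne (prb μ {ω' | Z ω' = z}) 0 with hz | hz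
    · have := le_prb_of_mem hμ (E := {ω' | Z ω' = z}) h
      rw [hz, zero_mul]
      linarith [hμ ω]
    · exact mul_div_cancel₀ _ hz
  · exact mul_zero _

lemma condMeasure_nonneg (hμ : ∀ ω, 0 ≤ μ ω) (Z : Ω → T) (z : T) (ω : Ω) :
    0 ≤ condMeasure μ Z z ω := by
  rw [condMeasure]
  split_ifs
  exacts [div_nonneg (hμ ω) (prb_nonneg hμ _), le_rfl]

lemma prb_condMeasure (μ : Ω → ℝ) (Z : Ω → T) (z : T) (E : Set Ω) :
    prb (condMeasure μ Z z) E = prb μ (E ∩ {ω | Z ω = z}) / prb μ {ω | Z ω = z} := by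
  simp only [prb, sum_filter, condMeasure, sum_div]
  refine sum_congr rfl fun ω _ => ?_
  split_ifs <;> simp_all

lemma isProb_condMeasure (hμ : IsProb μ) {Z : Ω → T} {z : T} (hz : prb μ {ω | Z ω = z} ≠ 0) :
    IsProb (condMeasure μ Z z) := by
  refine ⟨condMeasure_nonneg hμ.1 Z z, ?_⟩
  simpa [prb] using (prb_condMeasure μ Z z Set.univ).trans (by rw [Set.univ_inter, div_self hz])

lemma sum_prb_mul_le_sum_prb_mul (hμ : ∀ ω, 0 ≤ μ ω) (Z : Ω → T) (t : Finset T) {f g : T → ℝ}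
    (h : ∀ z, prb μ {ω | Z ω = z} ≠ 0 → f z ≤ g z) :
    ∑ z ∈ t, prb μ {ω | Z ω = z} * f z ≤ ∑ z ∈ t, prb μ {ω | Z ω = z} * g z := by
  refine sum_le_sum fun z _ => ?_
  rcases eq_or_ne (prb μ {ω | Z ω = z}) 0 with hz | hz
  · simp [hz]
  · exact mul_le_mul_of_nonneg_left (h z hz) (prb_nonneg hμ _)

lemma sum_prb_mul_sum_condMeasure (hμ : ∀ ω, 0 ≤ μ ω) {Z : Ω → T} {t : Finset T}
    (ht : ∀ ω, Z ω ∈ t) (g : T → Ω → ℝ) :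
    ∑ z ∈ t, prb μ {ω | Z ω = z} * ∑ ω, condMeasure μ Z z ω * g z ω = ∑ ω, μ ω * g (Z ω) ω := by
  simp only [mul_sum, ← mul_assoc, prb_mul_condMeasure hμ, ite_mul, zero_mul]
  rw [sum_comm]
  simp [sum_ite_eq, ht]

lemma condEnt_eq_sum (hμ : ∀ ω, 0 ≤ μ ω) (X : Ω → S) {Z : Ω → T} {t : Finset T}
    (ht : ∀ ω, Z ω ∈ t) :
    condEnt μ X Z = ∑ z ∈ t, prb μ {ω | Z ω = z} * ent (condMeasure μ Z z) X := by
  simp only [ent_eq_sum_neg_log (condMeasure μ Z _), sum_prb_mul_sum_condMeasure hμ ht, condEnt,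
    ent_eq_sum_neg_log μ, ← sum_sub_distrib]
  refine sum_congr rfl fun ω _ => ?_
  rcases eq_or_ne (μ ω) 0 with h | h
  · simp [h]
  have hXZ : {ω' | (X ω', Z ω') = (X ω, Z ω)} = {ω' | X ω' = X ω} ∩ {ω' | Z ω' = Z ω} := by
    ext; simp
  have h₁ : 0 < prb μ ({ω' | X ω' = X ω} ∩ {ω' | Z ω' = Z ω}) := prb_pos_of_mem hμ ⟨rfl, rfl⟩ h
  have h₂ : 0 < prb μ {ω' | Z ω' = Z ω} := prb_pos_of_mem hμ rfl h
  rw [prb_condMeasure, hXZ, log_div h₁.ne' h₂.ne']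
  ring

lemma condMeasure_condMeasure (hμ : ∀ ω, 0 ≤ μ ω) (W : Ω → U) (Z : Ω → T) (w : U) (z : T) :
    condMeasure (condMeasure μ Z z) W w = condMeasure μ (fun ω => (W ω, Z ω)) (w, z) := by
  funext ω
  rcases eq_or_ne (prb μ {ω | Z ω = z}) 0 with hz | hz
  · have hμz : Z ω = z → μ ω = 0 := fun h =>
      le_antisymm (hz ▸ le_prb_of_mem hμ (E := {ω | Z ω = z}) h) (hμ ω)
    simp only [condMeasure, hz, div_zero, Prod.mk.injEq]
    split_ifs <;> simp_all
  · simp only [condMeasure, prb_condMeasure, Prod.mk.injEq]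
    split_ifs <;> simp_all [div_div_div_cancel_right₀ hz, Set.ofPred_and]

lemma condEnt_pair_eq_sum (hμ : ∀ ω, 0 ≤ μ ω) (X : Ω → S) (W : Ω → U) (Z : Ω → T) :
    condEnt μ X (fun ω => (W ω, Z ω)) = ∑ z ∈ univ.image Z,
      prb μ {ω | Z ω = z} * condEnt (condMeasure μ Z z) X W := by
  have hZ : ∀ ω, Z ω ∈ univ.image Z := fun ω => mem_image_of_mem Z (mem_univ ω)
  have hassoc : ent μ (fun ω => ((X ω, W ω), Z ω)) = ent μ (fun ω => (X ω, (W ω, Z ω))) :=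
    (ent_comp_eq_of_leftInverse hμ (fun ω => ((X ω, W ω), Z ω)) (fun p => (p.1.1, (p.1.2, p.2)))
      (fun p => ((p.1, p.2.1), p.2.2)) fun _ => rfl).symm
  have hXW := condEnt_eq_sum hμ (fun ω => (X ω, W ω)) hZ
  have hW := condEnt_eq_sum hμ W hZ
  simp only [condEnt, mul_sub, sum_sub_distrib] at hXW hW ⊢
  rw [← hXW, ← hW, hassoc]
  ring

lemma condSelfDoubling_eq_sum (μ : Ω → ℝ) (X : Ω → ℚ) (Z : Ω → T) :
    condSelfDoubling μ X Z =
      ∑ ω, μ ω * rdist (condMeasure μ Z (Z ω)) (condMeasure μ Z (Z ω)) X X :=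
  sum_prb_fiber_mul μ (fun ω => mem_image_of_mem Z (mem_univ ω))
    fun z => rdist (condMeasure μ Z z) (condMeasure μ Z z) X X

lemma condSelfDoubling_pair_eq_sum (hμ : ∀ ω, 0 ≤ μ ω) (X : Ω → ℚ) (W : Ω → U) (Z : Ω → T) :
    condSelfDoubling μ X (fun ω => (W ω, Z ω)) = ∑ z ∈ univ.image Z,
      prb μ {ω | Z ω = z} * condSelfDoubling (condMeasure μ Z z) X W := by
  simp only [condSelfDoubling_eq_sum _ X W, condSelfDoubling_eq_sum μ X,
    sum_prb_mul_sum_condMeasure hμ fun ω => mem_image_of_mem Z (mem_univ ω),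
    condMeasure_condMeasure hμ]

lemma condMeasure_prod_fst {ν : Ω → ℝ} {ρ : Ω' → ℝ} (hρ : IsProb ρ) (W : Ω → T) (w : T) :
    condMeasure (ν ⊗ₚ ρ) (fun p => W p.1) w = condMeasure ν W w ⊗ₚ ρ := by
  have hW : prb (ν ⊗ₚ ρ) {p | W p.1 = w} = prb ν {ω | W ω = w} :=
    prb_prod_fst hρ {ω | W ω = w}
  funext p
  simp only [condMeasure, hW]
  split_ifs
  exacts [mul_div_right_comm _ _ _, (zero_mul _).symm]

end Conditioning

section Doubling

variable {Ω Ω' S T : Type*} [Fintype Ω] [Fintype Ω'] {ν : Ω → ℝ}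

lemma sum_prb_mul_rdist_condMeasure_le {ρ : Ω' → ℝ} (hν : IsProb ν) (hρ : IsProb ρ)
    (X : Ω → ℚ) (Y : Ω' → ℚ) (W : Ω → T) :
    ∑ w ∈ univ.image W, prb ν {ω | W ω = w} * rdist (condMeasure ν W w) ρ X Y ≤
      rdist ν ρ X Y + (ent ν X - condEnt ν X W) / 2 := by
  have hW : ∀ ω, W ω ∈ univ.image W := fun ω => mem_image_of_mem W (mem_univ ω)
  have hsum : ∑ w ∈ univ.image W, prb ν {ω | W ω = w} * rdist (condMeasure ν W w) ρ X Y =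
      ∑ w ∈ univ.image W, prb ν {ω | W ω = w} *
          ent (condMeasure ν W w ⊗ₚ ρ) (fun p => X p.1 - Y p.2)
        - (∑ w ∈ univ.image W, prb ν {ω | W ω = w} * ent (condMeasure ν W w) X) / 2
        - (∑ w ∈ univ.image W, prb ν {ω | W ω = w}) * ent ρ Y / 2 := by
    simp only [rdist, mul_sub, sum_sub_distrib, sum_mul, sum_div, mul_div_assoc]
  have hcond : ∑ w ∈ univ.image W, prb ν {ω | W ω = w} *
      ent (condMeasure ν W w ⊗ₚ ρ) (fun p => X p.1 - Y p.2) =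
      condEnt (ν ⊗ₚ ρ) (fun p => X p.1 - Y p.2) (fun p => W p.1) := by
    rw [condEnt_eq_sum (isProb_prod hν hρ).1 _ (t := univ.image W) fun p => hW p.1]
    refine sum_congr rfl fun w _ => ?_
    rw [condMeasure_prod_fst hρ]
    congr 1
    exact (prb_prod_fst hρ {ω | W ω = w}).symm
  have hle := condEnt_le_ent (isProb_prod hν hρ) (fun p => X p.1 - Y p.2) (fun p => W p.1)
  rw [hsum, hcond, ← condEnt_eq_sum hν.1 X hW, sum_prb_fiber hν hW]
  simp only [rdist]
  linarith

lemma condSelfDoubling_le (hν : IsProb ν) (X : Ω → ℚ) (W : Ω → T) :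
    condSelfDoubling ν X W ≤ 2 * rdist ν ν X X + (ent ν X - condEnt ν X W) := by
  calc condSelfDoubling ν X W
      ≤ ∑ w ∈ univ.image W, prb ν {ω | W ω = w} * (2 * rdist (condMeasure ν W w) ν X X) :=
        sum_prb_mul_le_sum_prb_mul hν.1 W _ fun w hw =>
          rdist_self_le_two_mul (isProb_condMeasure hν hw) hν X X
    _ = 2 * ∑ w ∈ univ.image W, prb ν {ω | W ω = w} * rdist (condMeasure ν W w) ν X X := by
        rw [mul_sum]
        exact sum_congr rfl fun _ _ => mul_left_comm _ _ _
    _ ≤ 2 * (rdist ν ν X X + (ent ν X - condEnt ν X W) / 2) := by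
        gcongr
        exact sum_prb_mul_rdist_condMeasure_le hν hν X X W
    _ = 2 * rdist ν ν X X + (ent ν X - condEnt ν X W) := by ring

lemma condSelfDoubling_pair_le {μ : Ω → ℝ} (hμ : IsProb μ) (X : Ω → ℚ) (Z : Ω → S)
    (W : Ω → T) :
    condSelfDoubling μ X (fun ω => (W ω, Z ω)) ≤ 2 * condSelfDoubling μ X Z +
      (condEnt μ X Z - condEnt μ X (fun ω => (W ω, Z ω))) := by
  have hZ : ∀ ω, Z ω ∈ univ.image Z := fun ω => mem_image_of_mem Z (mem_univ ω)
  calc condSelfDoubling μ X (fun ω => (W ω, Z ω))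
      = ∑ z ∈ univ.image Z, prb μ {ω | Z ω = z} * condSelfDoubling (condMeasure μ Z z) X W :=
        condSelfDoubling_pair_eq_sum hμ.1 X W Z
    _ ≤ ∑ z ∈ univ.image Z, prb μ {ω | Z ω = z} *
          (2 * rdist (condMeasure μ Z z) (condMeasure μ Z z) X X +
            (ent (condMeasure μ Z z) X - condEnt (condMeasure μ Z z) X W)) :=
        sum_prb_mul_le_sum_prb_mul hμ.1 Z _ fun z hz =>
          condSelfDoubling_le (isProb_condMeasure hμ hz) X W
    _ = 2 * condSelfDoubling μ X Z + (condEnt μ X Z - condEnt μ X (fun ω => (W ω, Z ω))) := by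
        rw [condSelfDoubling, condEnt_eq_sum hμ.1 X hZ, condEnt_pair_eq_sum hμ.1, mul_sum,
          ← sum_sub_distrib, ← sum_add_distrib]
        exact sum_congr rfl fun _ _ => by ring

end Doubling

/-- Stability of controlled doubling under extra conditioning. -/
theorem cond_doubling_stable :
    ∃ C : ℝ, 0 < C ∧
      ∀ (Ω S T : Type) [Fintype Ω] (μ : Ω → ℝ), IsProb μ →
        ∀ (X : Ω → ℚ) (Z : Ω → S) (W : Ω → T) (M δ : ℝ), 0 < M → 0 ≤ δ →
          |condEnt μ X Z - M| ≤ δ * M →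
          |condEnt μ X (fun ω => (W ω, Z ω)) - M| ≤ δ * M →
          condSelfDoubling μ X (fun ω => (W ω, Z ω)) ≤
            2 * condSelfDoubling μ X Z + C * δ * M := by
  refine ⟨2, two_pos, fun Ω S T _ μ hμ X Z W M δ _ _ hZ hWZ => ?_⟩
  have := condSelfDoubling_pair_le hμ X Z W
  linarith [(abs_le.1 hZ).2, (abs_le.1 hWZ).1]
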